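/- Let Ω ⊂ ℝⁿ be a bounded open set. If u, v ∈ 𝒦_s(Ω), then the pointwise maximum max{u, v} also belongs to 𝒦_s(Ω); in particular [max{u,v}]_s < ∞ and 𝓔_s(max{u,v}, φ) ≤ ∫_{ℝⁿ} φ dx for every nonnegative φ ∈ 𝒟_s(Ω). -/

import Mathlib

open MeasureTheory ENNReal Filter Topology

noncomputable section

/-- Euclidean space ℝⁿ. -/
abbrev Rn (n : ℕ) := EuclideanSpace ℝ (Fin n)

/-- The first coordinate of a point of ℝⁿ (junk value `0` when `n = 0`). -/
def firstCoord {n : ℕ} (ζ : Rn n) : ℝ := if h : 0 < n then ζ ⟨0, h⟩ else 0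

/-- The normalization constant `c(n,s)`. -/
def cns (n : ℕ) (s : ℝ) : ℝ :=
  (∫ ζ : Rn n, (1 - Real.cos (firstCoord ζ)) / ‖ζ‖ ^ ((n : ℝ) + 2 * s))⁻¹

/-- The square of the Gagliardo seminorm `[u]_s²`, as an extended nonnegative real. -/
def gagSq (n : ℕ) (s : ℝ) (u : Rn n → ℝ) : ℝ≥0∞ :=
  ∫⁻ p : Rn n × Rn n,
    ENNReal.ofReal ((u p.1 - u p.2) ^ 2 / ‖p.1 - p.2‖ ^ ((n : ℝ) + 2 * s))

/-- The bilinear energy `𝓔_s(u,v)`. -/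
def energy (n : ℕ) (s : ℝ) (u v : Rn n → ℝ) : ℝ :=
  (cns n s / 2) *
    ∫ p : Rn n × Rn n,
      (u p.1 - u p.2) * (v p.1 - v p.2) / ‖p.1 - p.2‖ ^ ((n : ℝ) + 2 * s)

/-- The class `𝒟_s(D)`: `L²` functions with finite Gagliardo seminorm vanishing a.e. outside `D`. -/
def Ds (n : ℕ) (s : ℝ) (D : Set (Rn n)) (w : Rn n → ℝ) : Prop :=
  MemLp w 2 (volume : Measure (Rn n)) ∧ gagSq n s w < ⊤ ∧
    ∀ᵐ x : Rn n, x ∉ D → w x = 0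

/-- The class `𝒦_s(Ω)`: nonnegative elements of `𝒟_s(Ω)` with `(−Δ)^s w ≤ 1` weakly in `Ω`. -/
def Ks (n : ℕ) (s : ℝ) (Ω : Set (Rn n)) (w : Rn n → ℝ) : Prop :=
  Ds n s Ω w ∧ (∀ᵐ x : Rn n, 0 ≤ w x) ∧
    ∀ v : Rn n → ℝ, Ds n s Ω v → (∀ᵐ x : Rn n, 0 ≤ v x) →
      energy n s w v ≤ ∫ x : Rn n, v x

/-! With `g = u - v` one has `max u v = v + g⁺`. Test the inequality for `u` against
`ψₖ = min(φ, k g⁺)` and the one for `v` against `φ - ψₖ`; both are admissible, being Lipschitz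
combinations of `φ` and `g`, and their integrals add up to `∫ φ`. Adding the two inequalities
gives `𝓔(max u v, φ) + (c/2) ∫ Dₖ ≤ ∫ φ`, where the pointwise defect `Dₖ` is the Gagliardo
integrand of `(g, ψₖ)` minus that of `(g⁺, φ)`. As `k → ∞`, `ψₖ → φ·1_{g>0}` and the limiting
defect is pointwise nonnegative, while `Dₖ` stays above `-2 |integrand of (g, φ)|`, which is
integrable; by dominated convergence the negative part of `∫ Dₖ` vanishes in the limit. -/

section Pairs

variable {α : Type*} [MeasureSpace α]

theorem ae_fst_and_snd {P Q : α → Prop} (hP : ∀ᵐ x, P x) (hQ : ∀ᵐ x, Q x) :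
    ∀ᵐ p : α × α, P p.1 ∧ Q p.2 := by
  rw [Measure.volume_eq_prod]
  exact (Measure.quasiMeasurePreserving_fst.ae hP).and (Measure.quasiMeasurePreserving_snd.ae hQ)

theorem MeasureTheory.AEStronglyMeasurable.sub_fst_snd {E : Type*} [NormedAddCommGroup E]
    {f : α → E} (hf : AEStronglyMeasurable f volume) :
    AEStronglyMeasurable (fun p : α × α => f p.1 - f p.2) volume := by
  rw [Measure.volume_eq_prod]
  exact (hf.comp_quasiMeasurePreserving Measure.quasiMeasurePreserving_fst).sub
    (hf.comp_quasiMeasurePreserving Measure.quasiMeasurePreserving_snd)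

end Pairs

theorem tendsto_integral_min_zero_of_tendsto_nonneg {α : Type*} [MeasurableSpace α]
    {μ : Measure α} {F : ℕ → α → ℝ} {G B : α → ℝ} (hF : ∀ k, AEStronglyMeasurable (F k) μ)
    (hB : Integrable B μ) (hFB : ∀ k, ∀ᵐ x ∂μ, -B x ≤ F k x)
    (hFG : ∀ᵐ x ∂μ, Tendsto (fun k => F k x) atTop (𝓝 (G x))) (hG : ∀ᵐ x ∂μ, 0 ≤ G x) :
    Tendsto (fun k => ∫ x, min (F k x) 0 ∂μ) atTop (𝓝 0) := by
  have h := tendsto_integral_of_dominated_convergence (fun x => |B x|)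
    (F := fun k x => min (F k x) 0) (f := 0) (fun k => (hF k).inf aestronglyMeasurable_const) hB.abs
    (fun k => (hFB k).mono fun x hx => ?_) ((hFG.and hG).mono fun x hx => ?_)
  · simpa using h
  · rw [Real.norm_eq_abs, abs_of_nonpos (min_le_right _ _)]
    rcases le_total 0 (F k x) with h0 | h0
    · simp [min_eq_right h0]
    · rw [min_eq_left h0]; linarith [le_abs_self (B x)]
  · simpa [min_eq_right hx.2] using hx.1.min (tendsto_const_nhds (x := (0 : ℝ)))

theorem integral_min_zero_le {α : Type*} [MeasurableSpace α] {μ : Measure α} {F : α → ℝ}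
    (hF : Integrable F μ) : ∫ x, min (F x) 0 ∂μ ≤ ∫ x, F x ∂μ :=
  integral_mono (hF.inf (integrable_zero _ _ _)) hF fun x => min_le_left (F x) 0

theorem sq_le_of_abs_le_mul_max_abs {x a b K : ℝ} (h : |x| ≤ K * max |a| |b|) :
    x ^ 2 ≤ K ^ 2 * (a ^ 2 + b ^ 2) := by
  have hx : x ^ 2 ≤ (K * max |a| |b|) ^ 2 := by
    rw [← sq_abs x]; exact pow_le_pow_left₀ (abs_nonneg x) h 2
  rcases max_cases |a| |b| with ⟨hm, -⟩ | ⟨hm, -⟩ <;> rw [hm, mul_pow, sq_abs] at hx <;>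
    nlinarith [sq_nonneg a, sq_nonneg b, sq_nonneg K]

theorem tendsto_min_natCast_mul_max_zero {p : ℝ} (hp : 0 ≤ p) (a : ℝ) :
    Tendsto (fun k : ℕ => min p (k * max a 0)) atTop (𝓝 (if 0 < a then p else 0)) := by
  split_ifs with ha
  · have hk : Tendsto (fun k : ℕ => (k : ℝ) * max a 0) atTop atTop :=
      tendsto_natCast_atTop_atTop.atTop_mul_const (lt_max_of_lt_left ha)
    exact tendsto_const_nhds.congr' ((tendsto_atTop.1 hk p).mono fun k hk => (min_eq_left hk).symm)
  · simp [max_eq_right (not_lt.1 ha), hp]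

theorem cns_nonneg (n : ℕ) (s : ℝ) : 0 ≤ cns n s :=
  inv_nonneg.2 <| integral_nonneg fun _ =>
    div_nonneg (sub_nonneg.2 (Real.cos_le_one _)) (by positivity)

def gagliardoIntegrand (n : ℕ) (s : ℝ) (f g : Rn n → ℝ) (p : Rn n × Rn n) : ℝ :=
  (f p.1 - f p.2) * (g p.1 - g p.2) / ‖p.1 - p.2‖ ^ ((n : ℝ) + 2 * s)

section Gagliardo

variable {n : ℕ} {s : ℝ} {f g : Rn n → ℝ}

theorem energy_eq_integral_gagliardoIntegrand (f g : Rn n → ℝ) :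
    energy n s f g = cns n s / 2 * ∫ p, gagliardoIntegrand n s f g p := rfl

theorem gagSq_eq_lintegral_gagliardoIntegrand (f : Rn n → ℝ) :
    gagSq n s f = ∫⁻ p, ENNReal.ofReal (gagliardoIntegrand n s f f p) := by
  simp only [gagSq, gagliardoIntegrand, sq]

theorem gagliardoIntegrand_self_nonneg (f : Rn n → ℝ) (p : Rn n × Rn n) :
    0 ≤ gagliardoIntegrand n s f f p :=
  div_nonneg (mul_self_nonneg _) (by positivity)

theorem MeasureTheory.AEStronglyMeasurable.gagliardoIntegrand
    (hf : AEStronglyMeasurable f volume) (hg : AEStronglyMeasurable g volume) :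
    AEStronglyMeasurable (gagliardoIntegrand n s f g) volume :=
  (hf.sub_fst_snd.mul hg.sub_fst_snd).div₀
    ((measurable_fst.sub measurable_snd).norm.pow_const _).aestronglyMeasurable

theorem integrable_gagliardoIntegrand_self (hf : AEStronglyMeasurable f volume)
    (hfG : gagSq n s f < ⊤) : Integrable (gagliardoIntegrand n s f f) :=
  ⟨hf.gagliardoIntegrand hf, (hasFiniteIntegral_iff_ofReal
    (ae_of_all _ (gagliardoIntegrand_self_nonneg f))).2 (by
      rwa [← gagSq_eq_lintegral_gagliardoIntegrand])⟩

theorem integrable_gagliardoIntegrand (hf : AEStronglyMeasurable f volume)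
    (hg : AEStronglyMeasurable g volume) (hfG : gagSq n s f < ⊤) (hgG : gagSq n s g < ⊤) :
    Integrable (gagliardoIntegrand n s f g) := by
  refine ((integrable_gagliardoIntegrand_self hf hfG).add
    (integrable_gagliardoIntegrand_self hg hgG)).mono' (hf.gagliardoIntegrand hg)
    (ae_of_all _ fun p => ?_)
  have hab : |(f p.1 - f p.2) * (g p.1 - g p.2)| ≤
      (f p.1 - f p.2) * (f p.1 - f p.2) + (g p.1 - g p.2) * (g p.1 - g p.2) := by
    rw [abs_mul]
    nlinarith [sq_nonneg (|f p.1 - f p.2| - |g p.1 - g p.2|), abs_mul_abs_self (f p.1 - f p.2),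
      abs_mul_abs_self (g p.1 - g p.2)]
  simp only [gagliardoIntegrand, Pi.add_apply, Real.norm_eq_abs, abs_div,
    abs_of_nonneg (by positivity : (0 : ℝ) ≤ ‖p.1 - p.2‖ ^ ((n : ℝ) + 2 * s)), ← add_div]
  gcongr

theorem gagSq_lt_top_of_sq_sub_le {f g₁ g₂ : Rn n → ℝ} {C : ℝ} (hC : 0 ≤ C)
    (hg₁ : AEStronglyMeasurable g₁ volume) (hg₁G : gagSq n s g₁ < ⊤) (hg₂G : gagSq n s g₂ < ⊤)
    (hf : ∀ x y, (f x - f y) ^ 2 ≤ C * ((g₁ x - g₁ y) ^ 2 + (g₂ x - g₂ y) ^ 2)) :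
    gagSq n s f < ⊤ := by
  calc gagSq n s f
      ≤ ∫⁻ p, ENNReal.ofReal C * (ENNReal.ofReal (gagliardoIntegrand n s g₁ g₁ p) +
          ENNReal.ofReal (gagliardoIntegrand n s g₂ g₂ p)) := by
        rw [gagSq_eq_lintegral_gagliardoIntegrand]
        refine lintegral_mono fun p => ?_
        rw [← ENNReal.ofReal_add (gagliardoIntegrand_self_nonneg _ _)
          (gagliardoIntegrand_self_nonneg _ _), ← ENNReal.ofReal_mul hC]
        refine ENNReal.ofReal_le_ofReal ?_
        simp only [gagliardoIntegrand, ← sq, ← add_div, ← mul_div_assoc]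
        gcongr
        exact hf _ _
    _ = ENNReal.ofReal C * (gagSq n s g₁ + gagSq n s g₂) := by
        rw [lintegral_const_mul' _ _ ENNReal.ofReal_ne_top,
          lintegral_add_left' (hg₁.gagliardoIntegrand hg₁).aemeasurable.ennreal_ofReal,
          gagSq_eq_lintegral_gagliardoIntegrand, gagSq_eq_lintegral_gagliardoIntegrand]
    _ < ⊤ := by finiteness

end Gagliardo

namespace Ds

variable {n : ℕ} {s : ℝ} {Ω : Set (Rn n)} {f g : Rn n → ℝ}

theorem integrable (hΩ : Bornology.IsBounded Ω) (hf : Ds n s Ω f) : Integrable f := by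
  have := isFiniteMeasure_restrict.2 (hΩ.measure_lt_top (μ := volume)).ne
  exact IntegrableOn.integrable_of_ae_notMem_eq_zero ((hf.1.restrict Ω).integrable one_le_two)
    hf.2.2

theorem integrable_gagliardoIntegrand (hf : Ds n s Ω f) (hg : Ds n s Ω g) :
    Integrable (gagliardoIntegrand n s f g) :=
  _root_.integrable_gagliardoIntegrand hf.1.1 hg.1.1 hf.2.1 hg.2.1

theorem lipschitzWith_comp {F : ℝ × ℝ → ℝ} {K : NNReal} (hF : LipschitzWith K F) (hF0 : F 0 = 0)
    (hf : Ds n s Ω f) (hg : Ds n s Ω g) : Ds n s Ω (fun x => F (f x, g x)) := by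
  obtain ⟨hfL, hfG, hf0⟩ := hf
  obtain ⟨hgL, hgG, hg0⟩ := hg
  refine ⟨hF.comp_memLp hF0 (memLp_prod_iff.2 ⟨hfL, hgL⟩),
    gagSq_lt_top_of_sq_sub_le (sq_nonneg (K : ℝ)) hfL.1 hfG hgG fun x y => ?_, ?_⟩
  · apply sq_le_of_abs_le_mul_max_abs
    simpa only [Real.dist_eq, Prod.dist_eq] using hF.dist_le_mul (f x, g x) (f y, g y)
  · filter_upwards [hf0, hg0] with x hfx hgx hx
    simpa [hfx hx, hgx hx, ← Prod.zero_eq_mk] using hF0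

theorem sup (hf : Ds n s Ω f) (hg : Ds n s Ω g) : Ds n s Ω (fun x => max (f x) (g x)) :=
  lipschitzWith_comp lipschitzWith_max (by simp) hf hg

theorem sub (hf : Ds n s Ω f) (hg : Ds n s Ω g) : Ds n s Ω (fun x => f x - g x) :=
  lipschitzWith_comp SeminormedAddCommGroup.lipschitzWith_sub (by simp) hf hg

theorem max_zero (hf : Ds n s Ω f) : Ds n s Ω (fun x => max (f x) 0) :=
  lipschitzWith_comp (LipschitzWith.prod_fst.max_const 0) (by simp) hf hf

theorem min_mul_max_zero (hf : Ds n s Ω f) (hg : Ds n s Ω g) (k : ℝ) :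
    Ds n s Ω (fun x => min (f x) (k * max (g x) 0)) :=
  lipschitzWith_comp (LipschitzWith.prod_fst.min
    ((lipschitzWith_smul k).comp (LipschitzWith.prod_snd.max_const 0))) (by simp) hf hg

end Ds

section Maximum

variable {n : ℕ} {s : ℝ}

theorem gagliardoIntegrand_add_sub_max (u v φ ψ : Rn n → ℝ) (p : Rn n × Rn n) :
    gagliardoIntegrand n s u ψ p + gagliardoIntegrand n s v (fun x => φ x - ψ x) p -
        gagliardoIntegrand n s (fun x => max (u x) (v x)) φ p =
      gagliardoIntegrand n s (fun x => u x - v x) ψ p -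
        gagliardoIntegrand n s (fun x => max (u x - v x) 0) φ p := by
  have hmax (x : Rn n) : max (u x - v x) 0 = max (u x) (v x) - v x := by
    rw [← max_sub_sub_right, sub_self]
  simp only [gagliardoIntegrand, ← add_div, ← sub_div, hmax]
  ring

theorem neg_two_mul_abs_le_gagliardoIntegrand_min_sub {k : ℝ} (hk : 0 ≤ k) (f φ : Rn n → ℝ)
    (p : Rn n × Rn n) :
    -(2 * |gagliardoIntegrand n s f φ p|) ≤
      gagliardoIntegrand n s f (fun x => min (φ x) (k * max (f x) 0)) p -
        gagliardoIntegrand n s (fun x => max (f x) 0) φ p := by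
  set a := f p.1
  set b := f p.2
  set c := k * max b 0
  have hmono : 0 ≤ (a - b) * (min (φ p.1) (k * max a 0) - min (φ p.1) c) := by
    rcases le_total a b with h | h
    · exact mul_nonneg_of_nonpos_of_nonpos (sub_nonpos.2 h) (sub_nonpos.2 (min_le_min_left _
        (mul_le_mul_of_nonneg_left (max_le_max_right 0 h) hk)))
    · exact mul_nonneg (sub_nonneg.2 h) (sub_nonneg.2 (min_le_min_left _
        (mul_le_mul_of_nonneg_left (max_le_max_right 0 h) hk)))
  have hmin : |min (φ p.1) c - min (φ p.2) c| ≤ |φ p.1 - φ p.2| :=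
    (abs_min_sub_min_le_max _ _ _ _).trans (by simp)
  have hlip : -(|a - b| * |φ p.1 - φ p.2|) ≤ (a - b) * (min (φ p.1) c - min (φ p.2) c) :=
    calc -(|a - b| * |φ p.1 - φ p.2|) ≤ -|(a - b) * (min (φ p.1) c - min (φ p.2) c)| := by
          rw [abs_mul]; exact neg_le_neg (mul_le_mul_of_nonneg_left hmin (abs_nonneg _))
      _ ≤ _ := neg_abs_le _
  have hpos : (max a 0 - max b 0) * (φ p.1 - φ p.2) ≤ |a - b| * |φ p.1 - φ p.2| :=
    (le_abs_self _).trans <| by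
      rw [abs_mul]; exact mul_le_mul_of_nonneg_right (abs_max_sub_max_le_abs a b 0) (abs_nonneg _)
  have hK : 0 ≤ ‖p.1 - p.2‖ ^ ((n : ℝ) + 2 * s) := by positivity
  calc -(2 * |gagliardoIntegrand n s f φ p|)
      = -(2 * (|a - b| * |φ p.1 - φ p.2|)) / ‖p.1 - p.2‖ ^ ((n : ℝ) + 2 * s) := by
        simp only [gagliardoIntegrand, abs_div, abs_mul, abs_of_nonneg hK]; ring
    _ ≤ ((a - b) * (min (φ p.1) (k * max a 0) - min (φ p.2) c) -
          (max a 0 - max b 0) * (φ p.1 - φ p.2)) / ‖p.1 - p.2‖ ^ ((n : ℝ) + 2 * s) := by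
        gcongr; linarith
    _ = _ := by simp only [gagliardoIntegrand, sub_div]; rfl

theorem gagliardoIntegrand_ite_sub_nonneg (f φ : Rn n → ℝ) {p : Rn n × Rn n}
    (h₁ : 0 ≤ φ p.1) (h₂ : 0 ≤ φ p.2) :
    0 ≤ gagliardoIntegrand n s f (fun x => if 0 < f x then φ x else 0) p -
      gagliardoIntegrand n s (fun x => max (f x) 0) φ p := by
  rw [gagliardoIntegrand, gagliardoIntegrand, ← sub_div]
  refine div_nonneg ?_ (by positivity)
  simp only [max_def]
  split_ifs <;> nlinarith

variable {Ω : Set (Rn n)}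

theorem energy_add_energy_sub_eq {u v φ ψ : Rn n → ℝ} (hu : Ds n s Ω u) (hv : Ds n s Ω v)
    (hφ : Ds n s Ω φ) (hψ : Ds n s Ω ψ) :
    energy n s u ψ + energy n s v (fun x => φ x - ψ x) =
      energy n s (fun x => max (u x) (v x)) φ + cns n s / 2 * ∫ p,
        (gagliardoIntegrand n s (fun x => u x - v x) ψ p -
          gagliardoIntegrand n s (fun x => max (u x - v x) 0) φ p) := by
  have hUV : Integrable fun p =>
      gagliardoIntegrand n s u ψ p + gagliardoIntegrand n s v (fun x => φ x - ψ x) p :=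
    (hu.integrable_gagliardoIntegrand hψ).add (hv.integrable_gagliardoIntegrand (hφ.sub hψ))
  have h := integral_congr_ae (ae_of_all volume (gagliardoIntegrand_add_sub_max (s := s) u v φ ψ))
  rw [integral_sub hUV ((hu.sup hv).integrable_gagliardoIntegrand hφ),
    integral_add (hu.integrable_gagliardoIntegrand hψ)
      (hv.integrable_gagliardoIntegrand (hφ.sub hψ))] at h
  simp only [energy_eq_integral_gagliardoIntegrand]
  linear_combination cns n s / 2 * h

theorem Ks.energy_add_energy_sub_le (hΩ : Bornology.IsBounded Ω) {u v φ ψ : Rn n → ℝ}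
    (hu : Ks n s Ω u) (hv : Ks n s Ω v) (hφ : Ds n s Ω φ) (hψ : Ds n s Ω ψ)
    (hψ0 : ∀ᵐ x, 0 ≤ ψ x) (hψφ : ∀ᵐ x, ψ x ≤ φ x) :
    energy n s u ψ + energy n s v (fun x => φ x - ψ x) ≤ ∫ x, φ x :=
  calc _ ≤ (∫ x, ψ x) + ∫ x, (φ x - ψ x) :=
        add_le_add (hu.2.2 _ hψ hψ0) (hv.2.2 _ (hφ.sub hψ) (hψφ.mono fun _ => sub_nonneg.2))
    _ = ∫ x, φ x := by rw [integral_sub (hφ.integrable hΩ) (hψ.integrable hΩ)]; ring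

theorem tendsto_integral_min_defect_zero {g φ : Rn n → ℝ} (hg : Ds n s Ω g) (hφ : Ds n s Ω φ)
    (hφ0 : ∀ᵐ x, 0 ≤ φ x) :
    Tendsto (fun k : ℕ => ∫ p, min
      (gagliardoIntegrand n s g (fun x => min (φ x) (k * max (g x) 0)) p -
        gagliardoIntegrand n s (fun x => max (g x) 0) φ p) 0) atTop (𝓝 0) :=
  tendsto_integral_min_zero_of_tendsto_nonneg
    (fun k => ((hg.integrable_gagliardoIntegrand (hφ.min_mul_max_zero hg k)).sub
      (hg.max_zero.integrable_gagliardoIntegrand hφ)).1)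
    (G := fun p => gagliardoIntegrand n s g (fun x => if 0 < g x then φ x else 0) p -
      gagliardoIntegrand n s (fun x => max (g x) 0) φ p)
    ((hg.integrable_gagliardoIntegrand hφ).abs.const_mul 2)
    (fun k => ae_of_all _ (neg_two_mul_abs_le_gagliardoIntegrand_min_sub k.cast_nonneg g φ))
    ((ae_fst_and_snd hφ0 hφ0).mono fun _ hp =>
      ((((tendsto_min_natCast_mul_max_zero hp.1 _).sub
        (tendsto_min_natCast_mul_max_zero hp.2 _)).const_mul _).div_const _).sub_const _)
    ((ae_fst_and_snd hφ0 hφ0).mono fun _ hp => gagliardoIntegrand_ite_sub_nonneg g φ hp.1 hp.2)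

theorem Ks.energy_max_le (hΩ : Bornology.IsBounded Ω)
    {u v φ : Rn n → ℝ} (hu : Ks n s Ω u) (hv : Ks n s Ω v) (hφ : Ds n s Ω φ)
    (hφ0 : ∀ᵐ x, 0 ≤ φ x) :
    energy n s (fun x => max (u x) (v x)) φ ≤ ∫ x, φ x := by
  have hg := hu.1.sub hv.1
  have hlim := (tendsto_integral_min_defect_zero hg hφ hφ0).const_mul (cns n s / 2)
  refine ge_of_tendsto (by simpa using tendsto_const_nhds.sub hlim)
    (Eventually.of_forall fun k => ?_)
  set ψ := fun x => min (φ x) (k * max (u x - v x) 0)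
  have hψ : Ds n s Ω ψ := hφ.min_mul_max_zero hg k
  have hD : Integrable fun p => gagliardoIntegrand n s _ ψ p - gagliardoIntegrand n s _ φ p :=
    (hg.integrable_gagliardoIntegrand hψ).sub (hg.max_zero.integrable_gagliardoIntegrand hφ)
  have hmin := integral_min_zero_le hD
  have hc : 0 ≤ cns n s / 2 := by linarith [cns_nonneg n s]
  linarith [energy_add_energy_sub_eq hu.1 hv.1 hφ hψ, mul_le_mul_of_nonneg_left hmin hc,
    hu.energy_add_energy_sub_le hΩ hv hφ hψ (hφ0.mono fun x hx => le_min hx (by positivity))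
      (ae_of_all _ fun x => min_le_left _ _)]

end Maximum

theorem stmt6_general (n : ℕ) (s : ℝ)
    (Ω : Set (Rn n)) (hΩb : Bornology.IsBounded Ω)
    (u v : Rn n → ℝ) (hu : Ks n s Ω u) (hv : Ks n s Ω v) :
    Ks n s Ω (fun x => max (u x) (v x)) :=
  ⟨hu.1.sup hv.1, hu.2.1.mono fun _ hx => hx.trans (le_max_left _ _),
    fun _ hφ hφ0 => Ks.energy_max_le hΩb hu hv hφ hφ0⟩

theorem stmt6 (n : ℕ) (hn : 1 ≤ n) (s : ℝ) (hs : s ∈ Set.Ioo (0:ℝ) 1)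
    (Ω : Set (Rn n)) (hΩo : IsOpen Ω) (hΩb : Bornology.IsBounded Ω)
    (u v : Rn n → ℝ) (hu : Ks n s Ω u) (hv : Ks n s Ω v) :
    Ks n s Ω (fun x => max (u x) (v x)) :=
  stmt6_general n s Ω hΩb u v hu hv
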